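/- arXiv:1911.04767 — 3 statements merged into one kernel-verified Lean document; each statement's English description precedes it below -/
import Mathlib

section
/- For the Veronese sequence in CP^N, the squared norm of the i-th Veronese vector V_i^(N)(z) equals (N! · i!/(N-i)!) · (1+|z|²)^{N-2i} for all z ∈ ℂ and 0 ≤ i ≤ N. -/
open Complex Finset

section Aux
open Polynomial
variable {A : Type*} [CommRing A]

lemma coeff_one_add_C_mul_X_pow (s : A) (m k : ℕ) :
    ((1 + C s * X : A[X]) ^ m).coeff k = m.choose k * s ^ k := by
  rw [add_comm, add_pow, finset_sum_coeff]
  have : ∀ n ∈ Finset.range (m + 1),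
      ((C s * X) ^ n * 1 ^ (m - n) * (m.choose n : A[X])).coeff k
        = if n = k then (m.choose k : A) * s ^ k else 0 := by
    intro n _
    have : (C s * X) ^ n * 1 ^ (m - n) * (m.choose n : A[X])
        = C ((m.choose n : A) * s ^ n) * X ^ n := by
      push_cast [← C_eq_natCast]
      rw [mul_pow, ← C_pow, map_mul]
      ring
    rw [this, coeff_C_mul, coeff_X_pow]
    by_cases h : n = k
    · simp [h]
    · rw [if_neg (fun hk => h hk.symm), mul_zero, if_neg h]
  rw [Finset.sum_congr rfl this, Finset.sum_ite_eq' (Finset.range (m+1)) k]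
  by_cases h : k ≤ m
  · simp [Nat.lt_succ_iff, h]
  · simp [Nat.lt_succ_iff, h, Nat.choose_eq_zero_of_lt (lt_of_not_ge h)]

lemma coeff_prod_binom (t : A) (j m i : ℕ) :
    (((1 + X) ^ j * (1 - C t * X) ^ m : A[X])).coeff i
      = ∑ k ∈ Finset.range (i + 1),
          (-1 : A) ^ k * (j.choose (i - k) : A) * (m.choose k : A) * t ^ k := by
  have h1 : (1 + X : A[X]) = 1 + C 1 * X := by simp
  have h2 : (1 - C t * X : A[X]) = 1 + C (-t) * X := by rw [map_neg]; ring
  rw [mul_comm, coeff_mul, Finset.Nat.sum_antidiagonal_eq_sum_range_succ_mk]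
  refine Finset.sum_congr rfl fun k _ => ?_
  rw [h1, h2, coeff_one_add_C_mul_X_pow, coeff_one_add_C_mul_X_pow, neg_pow]
  ring


lemma star_identity (N i : ℕ) (t : A) :
    ∑ j ∈ Finset.range (N + 1), (N.choose j : A) * t ^ j *
        (∑ k ∈ Finset.range (i + 1),
          (-1 : A) ^ k * (j.choose (i - k) : A) * ((N - j).choose k : A) * t ^ k) ^ 2
      = (N.choose i : A) * t ^ i * (1 + t) ^ N := by
  set Sf : ℕ → A := fun j => ∑ k ∈ Finset.range (i + 1),
      (-1 : A) ^ k * (j.choose (i - k) : A) * ((N - j).choose k : A) * t ^ k with hSf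
  have hC : ∀ j, (((1 + X) ^ j * (1 - C (C t) * X) ^ (N - j) : A[X][X])).coeff i
      = C (Sf j) := by
    intro j
    rw [coeff_prod_binom, map_sum]
    refine Finset.sum_congr rfl fun k _ => ?_
    rw [map_mul, map_mul, map_mul, map_pow, map_pow, map_neg, map_one,
      map_natCast, map_natCast]
  have expand : (∑ j ∈ Finset.range (N + 1),
      C (((N.choose j : A[X])) * (C t) ^ j * (1 + X) ^ j * (1 - C t * X) ^ (N - j)) *
        ((1 + X) ^ j * (1 - C (C t) * X) ^ (N - j)) : A[X][X])
      = C ((C (1 + t)) ^ N) * (1 + C (C t * X) * X) ^ N := by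
    have huv : (C (C t * (1 + X)) * (1 + X) + C (1 - C t * X) * (1 - C (C t) * X) : A[X][X])
        = C (C (1 + t)) * (1 + C (C t * X) * X) := by
      simp only [map_mul, map_add, map_sub, map_one]
      ring
    have step : (∑ j ∈ Finset.range (N + 1),
        C (((N.choose j : A[X])) * (C t) ^ j * (1 + X) ^ j * (1 - C t * X) ^ (N - j)) *
          ((1 + X) ^ j * (1 - C (C t) * X) ^ (N - j)) : A[X][X])
        = (C (C t * (1 + X)) * (1 + X) + C (1 - C t * X) * (1 - C (C t) * X)) ^ N := by
      rw [add_pow]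
      refine Finset.sum_congr rfl fun j hj => ?_
      simp only [mul_pow, map_mul, map_pow, map_add, map_sub, map_one, map_natCast]
      ring
    rw [step, huv, mul_pow, ← map_pow]
  have h2 := congrArg (fun p : A[X][X] => (p.coeff i).coeff i) expand
  simp only [finset_sum_coeff, coeff_C_mul] at h2
  rw [Finset.sum_congr rfl (fun j _ => by rw [hC j])] at h2
  have hL : ∀ j ∈ Finset.range (N + 1),
      ((((N.choose j : A[X])) * (C t) ^ j * (1 + X) ^ j * (1 - C t * X) ^ (N - j)
        * C (Sf j)).coeff i : A) = (N.choose j : A) * t ^ j * (Sf j) ^ 2 := by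
    intro j _
    have hre : ((N.choose j : A[X])) * (C t) ^ j * (1 + X) ^ j * (1 - C t * X) ^ (N - j)
        * C (Sf j) = C ((N.choose j : A) * t ^ j * Sf j) *
          ((1 + X) ^ j * (1 - C t * X) ^ (N - j)) := by
      rw [map_mul, map_mul, map_natCast, ← map_pow]
      ring
    rw [hre, coeff_C_mul, coeff_prod_binom]
    have : Sf j = ∑ k ∈ Finset.range (i + 1),
        (-1 : A) ^ k * (j.choose (i - k) : A) * ((N - j).choose k : A) * t ^ k := rfl
    rw [← this]
    ring
  rw [Finset.sum_congr rfl hL] at h2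
  have hR : (((C (1 + t)) ^ N * (((1 + C (C t * X) * X) ^ N : A[X][X]).coeff i) : A[X])).coeff i
      = (N.choose i : A) * t ^ i * (1 + t) ^ N := by
    rw [coeff_one_add_C_mul_X_pow]
    have hre : ((C (1 + t)) ^ N * ((N.choose i : A[X]) * (C t * X) ^ i) : A[X])
        = C ((1 + t) ^ N * (N.choose i : A) * t ^ i) * X ^ i := by
      simp only [map_mul, map_pow, map_natCast, mul_pow]
      ring
    rw [hre, coeff_C_mul, coeff_X_pow, if_pos rfl]
    ring
  rw [hR] at h2
  exact h2

open Complex in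
lemma fact_eq (N i : ℕ) (hi : i ≤ N) :
    ((N.factorial : ℝ) * (i.factorial : ℝ) / ((N - i).factorial : ℝ))
      = (i.factorial : ℝ) ^ 2 * (N.choose i : ℝ) := by
  have h := Nat.choose_mul_factorial_mul_factorial hi
  have h' : ((N.choose i : ℝ)) * (i.factorial : ℝ) * ((N - i).factorial : ℝ)
      = (N.factorial : ℝ) := by exact_mod_cast congrArg (Nat.cast : ℕ → ℝ) h
  have hne : ((N - i).factorial : ℝ) ≠ 0 := Nat.cast_ne_zero.mpr (N - i).factorial_ne_zero
  field_simp
  nlinarith [h']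

end Aux

/-- The `j`-th component of the `i`-th Veronese map `V_i^(N) : ℂ → ℂ^{N+1}`. -/
noncomputable def veroneseComp (N i j : ℕ) (z : ℂ) : ℂ :=
  ((i.factorial : ℂ) / (1 + z * (starRingEnd ℂ) z) ^ i) *
    ((Real.sqrt (N.choose j) : ℝ) : ℂ) * z ^ ((j : ℤ) - (i : ℤ)) *
    ∑ k ∈ Finset.range (i + 1),
      (-1 : ℂ) ^ k * (j.choose (i - k) : ℂ) * ((N - j).choose k : ℂ) *
        (z * (starRingEnd ℂ) z) ^ k

/-- `|V_i^(N)(z)|² = (N! i!/(N-i)!) (1+|z|²)^{N-2i}` for all `z ∈ ℂ`, `0 ≤ i ≤ N`. -/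
theorem veronese_norm_sq (N i : ℕ) (hi : i ≤ N) (z : ℂ) :
    ∑ j ∈ Finset.range (N + 1), Complex.normSq (veroneseComp N i j z) =
      ((N.factorial : ℝ) * (i.factorial : ℝ) / ((N - i).factorial : ℝ)) *
        (1 + Complex.normSq z) ^ ((N : ℤ) - 2 * (i : ℤ)) := by
  set t : ℝ := Complex.normSq z with ht
  by_cases hz : z = 0
  · -- z = 0 case
    subst hz
    have hsum : ∑ j ∈ Finset.range (N + 1), Complex.normSq (veroneseComp N i j 0)
        = (i.factorial : ℝ) ^ 2 * (N.choose i : ℝ) := by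
      rw [Finset.sum_eq_single i]
      · -- value at i
        have hval : veroneseComp N i i 0 = (i.factorial : ℂ) * ((Real.sqrt (N.choose i) : ℝ) : ℂ) := by
          unfold veroneseComp
          rw [sub_self, zpow_zero]
          have hsum0 : ∑ k ∈ Finset.range (i + 1),
              (-1 : ℂ) ^ k * (i.choose (i - k) : ℂ) * ((N - i).choose k : ℂ) *
                ((0 : ℂ) * (starRingEnd ℂ) 0) ^ k = 1 := by
            rw [Finset.sum_eq_single 0]
            · simp
            · intro k _ hk
              simp [zero_pow hk]
            · simp
          rw [hsum0]
          simp
        rw [hval, map_mul, Complex.normSq_natCast, Complex.normSq_ofReal,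
          Real.mul_self_sqrt (Nat.cast_nonneg _)]
        ring
      · intro j _ hj
        have : veroneseComp N i j 0 = 0 := by
          unfold veroneseComp
          rw [zero_zpow _ (by simpa using sub_ne_zero.mpr (by exact_mod_cast hj))]
          ring
        rw [this, map_zero]
      · intro h
        exact absurd (Finset.mem_range.mpr (Nat.lt_succ_of_le hi)) h
    rw [hsum, fact_eq N i hi, ht]
    simp
  · -- z ≠ 0 case
    have htpos : 0 < t := Complex.normSq_pos.mpr hz
    set Sf : ℕ → ℝ := fun j => ∑ k ∈ Finset.range (i + 1),
        (-1 : ℝ) ^ k * (j.choose (i - k) : ℝ) * ((N - j).choose k : ℝ) * t ^ k with hSf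
    have hmc : z * (starRingEnd ℂ) z = ((t : ℝ) : ℂ) := Complex.mul_conj z
    have hterm : ∀ j, Complex.normSq (veroneseComp N i j z)
        = ((i.factorial : ℝ) ^ 2 / (1 + t) ^ (2 * i)) * (N.choose j : ℝ)
            * t ^ ((j : ℤ) - (i : ℤ)) * (Sf j) ^ 2 := by
      intro j
      have hsum : ∑ k ∈ Finset.range (i + 1),
          (-1 : ℂ) ^ k * (j.choose (i - k) : ℂ) * ((N - j).choose k : ℂ) *
            (z * (starRingEnd ℂ) z) ^ k = ((Sf j : ℝ) : ℂ) := by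
        rw [hSf]
        push_cast [hmc]
        rfl
      unfold veroneseComp
      rw [hsum, map_mul, map_mul, map_mul, map_div₀]
      rw [hmc]
      have h1t : (1 : ℂ) + ((t : ℝ) : ℂ) = (((1 + t : ℝ)) : ℂ) := by push_cast; ring
      rw [h1t, ← Complex.ofReal_pow, Complex.normSq_ofReal, Complex.normSq_natCast,
        Complex.normSq_ofReal, Complex.normSq_ofReal,
        Real.mul_self_sqrt (Nat.cast_nonneg _), map_zpow₀]
      rw [← ht]
      ring_nf
    rw [Finset.sum_congr rfl fun j _ => hterm j]
    have hzp : ∀ j : ℕ, t ^ ((j : ℤ) - (i : ℤ)) = t ^ j * ((t : ℝ) ^ i)⁻¹ := by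
      intro j
      rw [zpow_sub₀ (ne_of_gt htpos), zpow_natCast, zpow_natCast, div_eq_mul_inv]
    have key := star_identity (A := ℝ) N i t
    have h1t : (0 : ℝ) < 1 + t := by linarith
    have hrw : ∑ j ∈ Finset.range (N + 1),
        ((i.factorial : ℝ) ^ 2 / (1 + t) ^ (2 * i)) * (N.choose j : ℝ)
          * t ^ ((j : ℤ) - (i : ℤ)) * (Sf j) ^ 2
        = ((i.factorial : ℝ) ^ 2 / (1 + t) ^ (2 * i)) * ((t : ℝ) ^ i)⁻¹ *
            ∑ j ∈ Finset.range (N + 1), (N.choose j : ℝ) * t ^ j * (Sf j) ^ 2 := by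
      rw [Finset.mul_sum]
      refine Finset.sum_congr rfl fun j _ => ?_
      rw [hzp j]
      ring
    rw [hrw, key, fact_eq N i hi]
    rw [zpow_sub₀ (ne_of_gt h1t), zpow_natCast]
    have : ((1 + t) ^ ((2 : ℤ) * (i : ℤ)) : ℝ) = (1 + t) ^ (2 * i) := by
      rw [show ((2 : ℤ) * (i : ℤ)) = ((2 * i : ℕ) : ℤ) by push_cast; ring, zpow_natCast]
    rw [this]
    field_simp
end

section
/- Let Ω₋₁ = [[x,y],[z,w]] and Ω₀ = [[λ,ν],[0,μ]] be 2×2 complex matrices with rank Ω₋₁ = 2, rank Ω₀ = 2 (so λμ ≠ 0), and suppose M₁ is a real number satisfying: M₁ μ̄ = μ̄(−2|ν|² − 2|μ|² + |z|² + |w|²), 0 = μ̄(x z̄ + y w̄ − 2 λ̄ ν), and M₁ ν̄ = ν̄(−2|λ|² − 2|μ|² − 2|ν|² + |x|² + 2|z|² + |w|²) + λ̄(x̄ z + ȳ w). Then ν = 0. -/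
open Complex ComplexConjugate

/-!
Cancelling `μ̄ ≠ 0` in the first two equations gives `M₁` explicitly and `x z̄ + y w̄ = 2 λ̄ ν`.
Conjugating the latter and substituting both into the third equation leaves
`ν̄ (|x|² + |z|²) = 0`. Since `Ω₋₁` is invertible its first column `(x, z)` is nonzero, so `ν = 0`.
-/

theorem norm_sq_add_norm_sq_ne_zero_of_det_ne_zero {𝕜 : Type*} [NormedField 𝕜] {x y z w : 𝕜}
    (hdet : x * w - y * z ≠ 0) : ‖x‖ ^ 2 + ‖z‖ ^ 2 ≠ 0 := by
  intro h
  obtain ⟨hx, hz⟩ := (add_eq_zero_iff_of_nonneg (sq_nonneg _) (sq_nonneg _)).mp h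
  apply hdet
  simp_all

theorem conj_mul_add_conj_mul_eq {x y z w lam nu : ℂ}
    (h : x * conj z + y * conj w = 2 * conj lam * nu) :
    conj x * z + conj y * w = 2 * lam * conj nu := by
  have h' := congrArg conj h
  simp only [map_add, map_mul, conj_conj, map_ofNat] at h'
  linear_combination h'

theorem conj_mul_norm_sq_add_norm_sq_eq_zero {x y z w lam mu nu : ℂ} {M₁ : ℝ}
    (hM : (M₁ : ℂ) = ((-2 * ‖nu‖ ^ 2 - 2 * ‖mu‖ ^ 2 + ‖z‖ ^ 2 + ‖w‖ ^ 2 : ℝ) : ℂ))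
    (hlin : conj x * z + conj y * w = 2 * lam * conj nu)
    (e3 : (M₁ : ℂ) * conj nu =
      conj nu * ((-2 * ‖lam‖ ^ 2 - 2 * ‖mu‖ ^ 2 - 2 * ‖nu‖ ^ 2 + ‖x‖ ^ 2 + 2 * ‖z‖ ^ 2 +
          ‖w‖ ^ 2 : ℝ) : ℂ) + conj lam * (conj x * z + conj y * w)) :
    conj nu * ((‖x‖ ^ 2 + ‖z‖ ^ 2 : ℝ) : ℂ) = 0 := by
  have hlam : lam * conj lam = ((‖lam‖ ^ 2 : ℝ) : ℂ) := by rw [mul_conj, Complex.sq_norm]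
  push_cast at hM e3 hlam ⊢
  linear_combination conj nu * hM - e3 - conj lam * hlin - 2 * conj nu * hlam

theorem nu_vanishes_general
    (x y z w lam mu nu : ℂ) (M₁ : ℝ)
    (hrank₁ : x * w - y * z ≠ 0) (hmu : mu ≠ 0)
    (e1 : (M₁ : ℂ) * (starRingEnd ℂ) mu =
      (starRingEnd ℂ) mu * ((-2 * ‖nu‖ ^ 2 - 2 * ‖mu‖ ^ 2 +
        ‖z‖ ^ 2 + ‖w‖ ^ 2 : ℝ) : ℂ))
    (e2 : (0 : ℂ) = (starRingEnd ℂ) mu *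
      (x * (starRingEnd ℂ) z + y * (starRingEnd ℂ) w - 2 * (starRingEnd ℂ) lam * nu))
    (e3 : (M₁ : ℂ) * (starRingEnd ℂ) nu =
      (starRingEnd ℂ) nu * ((-2 * ‖lam‖ ^ 2 - 2 * ‖mu‖ ^ 2 -
          2 * ‖nu‖ ^ 2 + ‖x‖ ^ 2 + 2 * ‖z‖ ^ 2 +
          ‖w‖ ^ 2 : ℝ) : ℂ) +
        (starRingEnd ℂ) lam * ((starRingEnd ℂ) x * z + (starRingEnd ℂ) y * w)) :
    nu = 0 := by
  have hcmu : conj mu ≠ 0 := (map_ne_zero _).mpr hmu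
  have hM := mul_left_cancel₀ hcmu (e1.symm.trans (mul_comm _ _)).symm
  have hlin : x * conj z + y * conj w = 2 * conj lam * nu :=
    sub_eq_zero.mp ((mul_eq_zero.mp e2.symm).resolve_left hcmu)
  have key := conj_mul_norm_sq_add_norm_sq_eq_zero hM (conj_mul_add_conj_mul_eq hlin) e3
  have hxz : ((‖x‖ ^ 2 + ‖z‖ ^ 2 : ℝ) : ℂ) ≠ 0 :=
    ofReal_ne_zero.mpr (norm_sq_add_norm_sq_ne_zero_of_det_ne_zero hrank₁)
  simpa using (mul_eq_zero.mp key).resolve_right hxz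

/-- For 2×2 matrices `Ω₋₁ = [[x,y],[z,w]]` (rank 2, i.e. `xw − yz ≠ 0`) and
`Ω₀ = [[λ,ν],[0,μ]]` (rank 2, i.e. `λμ ≠ 0`), if a real number `M₁` satisfies the
system (6.6), then `ν = 0`. -/
theorem nu_vanishes
    (x y z w lam mu nu : ℂ) (M₁ : ℝ)
    (hrank₁ : x * w - y * z ≠ 0) (hlam : lam ≠ 0) (hmu : mu ≠ 0)
    (e1 : (M₁ : ℂ) * (starRingEnd ℂ) mu =
      (starRingEnd ℂ) mu * ((-2 * ‖nu‖ ^ 2 - 2 * ‖mu‖ ^ 2 +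
        ‖z‖ ^ 2 + ‖w‖ ^ 2 : ℝ) : ℂ))
    (e2 : (0 : ℂ) = (starRingEnd ℂ) mu *
      (x * (starRingEnd ℂ) z + y * (starRingEnd ℂ) w - 2 * (starRingEnd ℂ) lam * nu))
    (e3 : (M₁ : ℂ) * (starRingEnd ℂ) nu =
      (starRingEnd ℂ) nu * ((-2 * ‖lam‖ ^ 2 - 2 * ‖mu‖ ^ 2 -
          2 * ‖nu‖ ^ 2 + ‖x‖ ^ 2 + 2 * ‖z‖ ^ 2 +
          ‖w‖ ^ 2 : ℝ) : ℂ) +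
        (starRingEnd ℂ) lam * ((starRingEnd ℂ) x * z + (starRingEnd ℂ) y * w)) :
    nu = 0 :=
  nu_vanishes_general x y z w lam mu nu M₁ hrank₁ hmu e1 e2 e3
end

section
/- Suppose x, y, z, w, λ, μ ∈ ℂ and M₁ ∈ ℝ satisfy: (M₁ + 2|x|² + 2|y|² − 2|λ|²)x̄ = 0, (M₁ + 2|x|² + 2|y|² − |λ|²)ȳ = 0, (M₁ + 2|z|² + 2|w|² − |λ|² − |μ|²)z̄ = 0, (M₁ + 2|z|² + 2|w|² − |μ|²)w̄ = 0, together with M₁ = −2|λ|² + 2|x|² + |y|² + |z|², M₁ = −2|μ|² + |z|² + |w|², x z̄ + y w̄ = 0, with xw − yz ≠ 0 and λ ≠ 0, μ ≠ 0, M₁ ≠ 0. Then x = 0, w = 0, |y|² = |μ|² = −2M₁, and |z|² = |λ|² = −3M₁. -/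
/-!
The coefficients of the first two equations differ by `|λ|²`, as do those of the next two, so
`x = 0 ∨ y = 0` and `z = 0 ∨ w = 0`. Rank 2 leaves only the antidiagonal or the diagonal shape.
On the antidiagonal the four surviving equations are linear in the squared norms and determine
them; on the diagonal they force `M₁ = 0`.
-/

open Complex

theorem ofReal_mul_conj_eq_zero_iff {r : ℝ} {u : ℂ} :
    (r : ℂ) * (starRingEnd ℂ) u = 0 ↔ r = 0 ∨ u = 0 := by
  simp

theorem eq_zero_or_eq_zero_of_ofReal_mul_conj_eq_zero {a b : ℝ} {u v : ℂ} (hab : a ≠ b)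
    (hu : (a : ℂ) * (starRingEnd ℂ) u = 0) (hv : (b : ℂ) * (starRingEnd ℂ) v = 0) :
    u = 0 ∨ v = 0 := by
  rcases ofReal_mul_conj_eq_zero_iff.1 hu with ha | hu
  · rcases ofReal_mul_conj_eq_zero_iff.1 hv with hb | hv
    · exact absurd (ha.trans hb.symm) hab
    · exact Or.inr hv
  · exact Or.inl hu

theorem antidiagonal_or_diagonal_of_mul_sub_mul_ne_zero {R : Type*} [CommRing R]
    {x y z w : R} (hxy : x = 0 ∨ y = 0) (hzw : z = 0 ∨ w = 0) (h : x * w - y * z ≠ 0) :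
    (x = 0 ∧ w = 0 ∧ y ≠ 0 ∧ z ≠ 0) ∨ (y = 0 ∧ z = 0 ∧ x ≠ 0 ∧ w ≠ 0) := by
  rcases hxy with rfl | rfl <;> rcases hzw with rfl | rfl
  · simp at h
  · have h : y * z ≠ 0 := by simpa using h
    exact Or.inl ⟨rfl, rfl, left_ne_zero_of_mul h, right_ne_zero_of_mul h⟩
  · have h : x * w ≠ 0 := by simpa using h
    exact Or.inr ⟨rfl, rfl, left_ne_zero_of_mul h, right_ne_zero_of_mul h⟩
  · simp at h

theorem isotropy_order_one_system_general
    (x y z w lam mu : ℂ) (M₁ : ℝ)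
    (hrank : x * w - y * z ≠ 0) (hlam : lam ≠ 0) (hM : M₁ ≠ 0)
    (e1 : ((M₁ + 2 * ‖x‖ ^ 2 + 2 * ‖y‖ ^ 2 -
      2 * ‖lam‖ ^ 2 : ℝ) : ℂ) * (starRingEnd ℂ) x = 0)
    (e2 : ((M₁ + 2 * ‖x‖ ^ 2 + 2 * ‖y‖ ^ 2 -
      ‖lam‖ ^ 2 : ℝ) : ℂ) * (starRingEnd ℂ) y = 0)
    (e3 : ((M₁ + 2 * ‖z‖ ^ 2 + 2 * ‖w‖ ^ 2 -
      ‖lam‖ ^ 2 - ‖mu‖ ^ 2 : ℝ) : ℂ) * (starRingEnd ℂ) z = 0)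
    (e4 : ((M₁ + 2 * ‖z‖ ^ 2 + 2 * ‖w‖ ^ 2 -
      ‖mu‖ ^ 2 : ℝ) : ℂ) * (starRingEnd ℂ) w = 0)
    (e5 : M₁ = -2 * ‖lam‖ ^ 2 + 2 * ‖x‖ ^ 2 +
      ‖y‖ ^ 2 + ‖z‖ ^ 2)
    (e6 : M₁ = -2 * ‖mu‖ ^ 2 + ‖z‖ ^ 2 + ‖w‖ ^ 2) :
    x = 0 ∧ w = 0 ∧
      ‖y‖ ^ 2 = -2 * M₁ ∧ ‖mu‖ ^ 2 = -2 * M₁ ∧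
      ‖z‖ ^ 2 = -3 * M₁ ∧ ‖lam‖ ^ 2 = -3 * M₁ := by
  have hlam2 : 0 < ‖lam‖ ^ 2 := by positivity
  have hxy := eq_zero_or_eq_zero_of_ofReal_mul_conj_eq_zero (by intro h; linarith) e1 e2
  have hzw := eq_zero_or_eq_zero_of_ofReal_mul_conj_eq_zero (by intro h; linarith) e3 e4
  rcases antidiagonal_or_diagonal_of_mul_sub_mul_ne_zero hxy hzw hrank with
    ⟨rfl, rfl, hy, hz⟩ | ⟨rfl, rfl, hx, -⟩
  · have c2 := (ofReal_mul_conj_eq_zero_iff.1 e2).resolve_right hy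
    have c3 := (ofReal_mul_conj_eq_zero_iff.1 e3).resolve_right hz
    simp only [norm_zero] at c2 c3 e5 e6
    refine ⟨rfl, rfl, ?_, ?_, ?_, ?_⟩ <;> linarith
  · have c1 := (ofReal_mul_conj_eq_zero_iff.1 e1).resolve_right hx
    simp only [norm_zero] at c1 e5
    exact absurd (by linarith) hM

/-- The system (6.9)–(6.13) for a rank-2 matrix `[[x,y],[z,w]]`, `λ ≠ 0`, `μ ≠ 0`,
`M₁ ≠ 0` forces `x = 0`, `w = 0`, `|y|² = |μ|² = −2M₁`, `|z|² = |λ|² = −3M₁`. -/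
theorem isotropy_order_one_system
    (x y z w lam mu : ℂ) (M₁ : ℝ)
    (hrank : x * w - y * z ≠ 0) (hlam : lam ≠ 0) (hmu : mu ≠ 0) (hM : M₁ ≠ 0)
    (e1 : ((M₁ + 2 * ‖x‖ ^ 2 + 2 * ‖y‖ ^ 2 -
      2 * ‖lam‖ ^ 2 : ℝ) : ℂ) * (starRingEnd ℂ) x = 0)
    (e2 : ((M₁ + 2 * ‖x‖ ^ 2 + 2 * ‖y‖ ^ 2 -
      ‖lam‖ ^ 2 : ℝ) : ℂ) * (starRingEnd ℂ) y = 0)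
    (e3 : ((M₁ + 2 * ‖z‖ ^ 2 + 2 * ‖w‖ ^ 2 -
      ‖lam‖ ^ 2 - ‖mu‖ ^ 2 : ℝ) : ℂ) * (starRingEnd ℂ) z = 0)
    (e4 : ((M₁ + 2 * ‖z‖ ^ 2 + 2 * ‖w‖ ^ 2 -
      ‖mu‖ ^ 2 : ℝ) : ℂ) * (starRingEnd ℂ) w = 0)
    (e5 : M₁ = -2 * ‖lam‖ ^ 2 + 2 * ‖x‖ ^ 2 +
      ‖y‖ ^ 2 + ‖z‖ ^ 2)
    (e6 : M₁ = -2 * ‖mu‖ ^ 2 + ‖z‖ ^ 2 + ‖w‖ ^ 2)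
    (e7 : x * (starRingEnd ℂ) z + y * (starRingEnd ℂ) w = 0) :
    x = 0 ∧ w = 0 ∧
      ‖y‖ ^ 2 = -2 * M₁ ∧ ‖mu‖ ^ 2 = -2 * M₁ ∧
      ‖z‖ ^ 2 = -3 * M₁ ∧ ‖lam‖ ^ 2 = -3 * M₁ :=
  isotropy_order_one_system_general x y z w lam mu M₁ hrank hlam hM e1 e2 e3 e4 e5 e6
end
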